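/- Let K(t) := ∫_t^T ‖σ(s)ᵀv*(s)‖² ds with inf_s ‖σ(s)ᵀv*(s)‖ > 0, and define Δ(t) := K(t)^{-1/2} · Φ'(−√K(t)) / Φ(−√K(t)) for t ∈ [0,T). Then Δ(t) > 1 for all t ∈ [0,T), lim_{t↑T} Δ(t) = +∞, ∫_0^T Δ(s) ds < ∞, and ∫_0^T Δ(s)² ds = ∞. -/

import Mathlib

open MeasureTheory intervalIntegral

noncomputable def stdNormalCDF (x : ℝ) : ℝ :=
  (Real.sqrt (2 * Real.pi))⁻¹ * ∫ u in Set.Iic x, Real.exp (-u ^ 2 / 2)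

noncomputable def stdNormalPDF (x : ℝ) : ℝ :=
  (Real.sqrt (2 * Real.pi))⁻¹ * Real.exp (-x ^ 2 / 2)

/-!
Squeezing `g` between `c` and `C` squeezes `K(t)` between `c²(T - t)` and `C²(T - t)`, so everything
reduces to the behaviour of `L(k) = k^{-1/2} φ(-√k) / Φ(-√k)` as `k ↓ 0`, where `Δ(t) = L(K(t))`.
Mills' inequality `-d Φ(d) < φ(d)`, which holds because `√(2π) (φ(d) + d Φ(d))` is the integral of
`(d - u) e^{-u²/2}` over `(-∞, d]`, gives `L > 1`. Since `φ / Φ` is continuous and positive at `0`,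
`L(k)` is comparable to `k^{-1/2}` for small `k`, so `Δ(t)` is comparable to `(T - t)^{-1/2}`: it
blows up at `T` and is integrable, while its square is comparable to `(T - t)^{-1}`, which is not.
-/

open Set Filter Topology Real

section Gaussian

lemma exp_neg_sq_div_two_eq (u : ℝ) : exp (-u ^ 2 / 2) = exp (-(1 / 2) * u ^ 2) := by
  ring_nf

lemma integrable_exp_neg_sq_div_two : Integrable fun u : ℝ => exp (-u ^ 2 / 2) := by
  simpa only [exp_neg_sq_div_two_eq] using integrable_exp_neg_mul_sq (by norm_num : (0 : ℝ) < 1 / 2)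

lemma integrable_mul_exp_neg_sq_div_two : Integrable fun u : ℝ => u * exp (-u ^ 2 / 2) := by
  simpa only [exp_neg_sq_div_two_eq] using
    integrable_mul_exp_neg_mul_sq (by norm_num : (0 : ℝ) < 1 / 2)

lemma integral_exp_neg_sq_div_two : ∫ u : ℝ, exp (-u ^ 2 / 2) = √(2 * π) := by
  simp only [exp_neg_sq_div_two_eq, integral_gaussian]
  rw [div_div_eq_mul_div, div_one, mul_comm]

lemma tendsto_exp_neg_sq_div_two_atBot : Tendsto (fun u : ℝ => exp (-u ^ 2 / 2)) atBot (𝓝 0) := by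
  have h : Tendsto (fun u : ℝ => (-u) ^ 2) atBot atTop :=
    (tendsto_pow_atTop two_ne_zero).comp tendsto_neg_atBot_atTop
  simp only [even_two.neg_pow] at h
  exact tendsto_exp_atBot.comp ((tendsto_neg_atTop_atBot.comp h).atBot_div_const two_pos)

lemma integral_Iic_neg_mul_exp_neg_sq_div_two (d : ℝ) :
    ∫ u in Iic d, -u * exp (-u ^ 2 / 2) = exp (-d ^ 2 / 2) := by
  have hderiv (x : ℝ) : HasDerivAt (fun u : ℝ => exp (-u ^ 2 / 2)) (-x * exp (-x ^ 2 / 2)) x := by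
    convert (((hasDerivAt_pow 2 x).fun_neg).div_const 2).exp using 1
    ring
  have hint : Integrable fun u : ℝ => -u * exp (-u ^ 2 / 2) := by
    simpa only [neg_mul] using integrable_mul_exp_neg_sq_div_two.fun_neg
  rw [integral_Iic_of_hasDerivAt_of_tendsto' (fun x _ => hderiv x) hint.integrableOn
    tendsto_exp_neg_sq_div_two_atBot, sub_zero]

lemma sqrt_two_pi_pos : 0 < √(2 * π) := by positivity

lemma stdNormalPDF_pos (x : ℝ) : 0 < stdNormalPDF x := by
  unfold stdNormalPDF; positivity

lemma stdNormalPDF_le (x : ℝ) : stdNormalPDF x ≤ (√(2 * π))⁻¹ := by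
  unfold stdNormalPDF
  refine mul_le_of_le_one_right (by positivity) (exp_le_one_iff.mpr ?_)
  nlinarith [sq_nonneg x]

lemma exp_neg_div_two_le_stdNormalPDF {x B : ℝ} (h : x ^ 2 ≤ B) :
    (√(2 * π))⁻¹ * exp (-B / 2) ≤ stdNormalPDF x := by
  unfold stdNormalPDF
  gcongr

lemma continuous_stdNormalPDF : Continuous stdNormalPDF := by
  unfold stdNormalPDF; fun_prop

lemma stdNormalCDF_pos (x : ℝ) : 0 < stdNormalCDF x := by
  unfold stdNormalCDF
  refine mul_pos (by positivity) ?_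
  rw [setIntegral_pos_iff_support_of_nonneg_ae (ae_of_all _ fun u => (exp_pos _).le)
    integrable_exp_neg_sq_div_two.integrableOn]
  simp [Function.support, exp_ne_zero]

lemma stdNormalCDF_le_one (x : ℝ) : stdNormalCDF x ≤ 1 := by
  unfold stdNormalCDF
  rw [inv_mul_le_iff₀ sqrt_two_pi_pos, mul_one, ← integral_exp_neg_sq_div_two]
  exact setIntegral_le_integral integrable_exp_neg_sq_div_two (ae_of_all _ fun u => (exp_pos _).le)

lemma stdNormalCDF_mono : Monotone stdNormalCDF := fun x y hxy => by
  unfold stdNormalCDF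
  gcongr ?_ * ?_
  exact setIntegral_mono_set integrable_exp_neg_sq_div_two.integrableOn
    (ae_of_all _ fun u => (exp_pos _).le) (Iic_subset_Iic.mpr hxy).eventuallyLE

lemma continuous_stdNormalCDF : Continuous stdNormalCDF := by
  refine continuous_const.mul (continuous_iff_continuousAt.mpr fun x => ?_)
  exact (integrable_exp_neg_sq_div_two.integrableOn.continuousOn_Iic_primitive_Iic
    (a₀ := x + 1)).continuousAt (Iic_mem_nhds (lt_add_one x))

lemma neg_mul_stdNormalCDF_lt_stdNormalPDF (d : ℝ) : -d * stdNormalCDF d < stdNormalPDF d := by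
  have hint : Integrable fun u : ℝ => (d - u) * exp (-u ^ 2 / 2) := by
    simp only [sub_mul]
    exact (integrable_exp_neg_sq_div_two.const_mul d).sub integrable_mul_exp_neg_sq_div_two
  have hpos : 0 < ∫ u in Iic d, (d - u) * exp (-u ^ 2 / 2) := by
    rw [setIntegral_pos_iff_support_of_nonneg_ae _ hint.integrableOn]
    · refine measure_pos_of_superset (s := Iio d) (fun u (hu : u < d) => ?_) (by simp)
      exact ⟨(mul_pos (sub_pos.mpr hu) (exp_pos _)).ne', hu.le⟩
    · refine (ae_restrict_iff' measurableSet_Iic).mpr (ae_of_all _ fun u (hu : u ≤ d) => ?_)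
      exact mul_nonneg (sub_nonneg.mpr hu) (exp_pos _).le
  have hsplit : ∫ u in Iic d, (d - u) * exp (-u ^ 2 / 2)
      = d * (∫ u in Iic d, exp (-u ^ 2 / 2)) + exp (-d ^ 2 / 2) := by
    have hneg : Integrable fun u : ℝ => -u * exp (-u ^ 2 / 2) := by
      simpa only [neg_mul] using integrable_mul_exp_neg_sq_div_two.fun_neg
    simp only [sub_eq_add_neg d, add_mul]
    rw [MeasureTheory.integral_add (integrable_exp_neg_sq_div_two.const_mul d).integrableOn
      hneg.integrableOn, MeasureTheory.integral_const_mul, integral_Iic_neg_mul_exp_neg_sq_div_two]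
  unfold stdNormalCDF stdNormalPDF
  rw [hsplit] at hpos
  have := inv_pos.mpr sqrt_two_pi_pos
  nlinarith

end Gaussian

/-- The leverage multiple as a function of the remaining variance: `Δ(t) = leverage (K t)`. -/
noncomputable def leverage (k : ℝ) : ℝ :=
  (√k)⁻¹ * (stdNormalPDF (-√k) / stdNormalCDF (-√k))

section Leverage

lemma leverage_nonneg (k : ℝ) : 0 ≤ leverage k :=
  mul_nonneg (inv_nonneg.mpr (sqrt_nonneg k))
    (div_nonneg (stdNormalPDF_pos _).le (stdNormalCDF_pos _).le)

lemma measurable_leverage : Measurable leverage := by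
  have := continuous_stdNormalPDF.measurable
  have := continuous_stdNormalCDF.measurable
  unfold leverage
  fun_prop

lemma one_lt_leverage {k : ℝ} (hk : 0 < k) : 1 < leverage k := by
  have hmills := neg_mul_stdNormalCDF_lt_stdNormalPDF (-√k)
  rw [neg_neg] at hmills
  unfold leverage
  rw [lt_inv_mul_iff₀ (sqrt_pos.mpr hk), mul_one, lt_div_iff₀ (stdNormalCDF_pos _)]
  exact hmills

lemma tendsto_leverage_nhdsGT_zero : Tendsto leverage (𝓝[>] 0) atTop := by
  have hsqrt : Tendsto (fun k => √k) (𝓝[>] 0) (𝓝[>] 0) := by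
    refine tendsto_nhdsWithin_of_tendsto_nhds_of_eventually_within _ ?_ ?_
    · simpa using (continuous_sqrt.tendsto 0).mono_left nhdsWithin_le_nhds
    · filter_upwards [self_mem_nhdsWithin] with k hk using sqrt_pos.mpr hk
  have hneg : Tendsto (fun k => -√k) (𝓝[>] 0) (𝓝 0) := by
    simpa using (hsqrt.mono_right nhdsWithin_le_nhds).neg
  have hratio : Tendsto (fun k => stdNormalPDF (-√k) / stdNormalCDF (-√k)) (𝓝[>] 0)
      (𝓝 (stdNormalPDF 0 / stdNormalCDF 0)) :=
    ((continuous_stdNormalPDF.tendsto 0).comp hneg).div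
      ((continuous_stdNormalCDF.tendsto 0).comp hneg) (stdNormalCDF_pos 0).ne'
  exact (tendsto_inv_nhdsGT_zero.comp hsqrt).atTop_mul_pos
    (div_pos (stdNormalPDF_pos 0) (stdNormalCDF_pos 0)) hratio

lemma leverage_le_of_le {k B : ℝ} (hkB : k ≤ B) :
    leverage k ≤ (√(2 * π))⁻¹ / stdNormalCDF (-√B) * (√k)⁻¹ := by
  rw [leverage, mul_comm (√k)⁻¹]
  gcongr ?_ * _
  exact div_le_div₀ (by positivity) (stdNormalPDF_le _) (stdNormalCDF_pos _)
    (stdNormalCDF_mono (neg_le_neg (sqrt_le_sqrt hkB)))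

lemma le_leverage_of_le {k B : ℝ} (hk : 0 ≤ k) (hkB : k ≤ B) :
    (√(2 * π))⁻¹ * exp (-B / 2) * (√k)⁻¹ ≤ leverage k := by
  rw [leverage, mul_comm (√k)⁻¹]
  gcongr ?_ * _
  calc (√(2 * π))⁻¹ * exp (-B / 2) ≤ stdNormalPDF (-√k) :=
        exp_neg_div_two_le_stdNormalPDF (by rwa [neg_sq, sq_sqrt hk])
    _ ≤ stdNormalPDF (-√k) / stdNormalCDF (-√k) :=
        le_div_self (stdNormalPDF_pos _).le (stdNormalCDF_pos _) (stdNormalCDF_le_one _)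

end Leverage

lemma not_intervalIntegrable_of_mul_inv_sub_le {f : ℝ → ℝ} {a b m : ℝ} (hab : a < b) (hm : 0 < m)
    (hf : ∀ t ∈ Ioo a b, m * (b - t)⁻¹ ≤ f t) : ¬IntervalIntegrable f volume a b := by
  intro hint
  have hinv : IntervalIntegrable (fun t => (t - b)⁻¹) volume a b := by
    rw [intervalIntegrable_iff_integrableOn_Ioo_of_le hab.le] at hint ⊢
    refine (hint.const_mul m⁻¹).mono' (by fun_prop) ?_
    refine ae_restrict_of_forall_mem measurableSet_Ioo fun t ht => ?_
    rw [norm_inv, Real.norm_eq_abs, abs_sub_comm, abs_of_pos (sub_pos.mpr ht.2)]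
    exact (le_inv_mul_iff₀ hm).mpr (hf t ht)
  simp [hab.ne, right_mem_uIcc] at hinv

section RemainingVariance

variable {K : ℝ → ℝ} {a b : ℝ}

lemma tendsto_leverage_comp_nhdsLT {β : ℝ} (hK : ∀ t ∈ Ioo a b, 0 < K t ∧ K t ≤ β * (b - t))
    (hab : a < b) : Tendsto (fun t => leverage (K t)) (𝓝[<] b) atTop := by
  refine tendsto_leverage_nhdsGT_zero.comp (tendsto_nhdsWithin_iff.mpr ⟨?_, ?_⟩)
  · have hlim : Tendsto (fun t => β * (b - t)) (𝓝[<] b) (𝓝 0) := by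
      have : Continuous fun t => β * (b - t) := by fun_prop
      simpa using (this.tendsto b).mono_left nhdsWithin_le_nhds
    exact tendsto_of_tendsto_of_tendsto_of_le_of_le' tendsto_const_nhds hlim
      (eventually_of_mem (Ioo_mem_nhdsLT hab) fun t ht => (hK t ht).1.le)
      (eventually_of_mem (Ioo_mem_nhdsLT hab) fun t ht => (hK t ht).2)
  · exact eventually_of_mem (Ioo_mem_nhdsLT hab) fun t ht => (hK t ht).1

lemma intervalIntegrable_leverage_comp {α B : ℝ} (hα : 0 < α)
    (hK : ∀ t ∈ Ioo a b, α * (b - t) ≤ K t ∧ K t ≤ B)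
    (hKm : AEMeasurable K (volume.restrict (Ioo a b))) (hab : a < b) :
    IntervalIntegrable (fun t => leverage (K t)) volume a b := by
  set A := (√(2 * π))⁻¹ / stdNormalCDF (-√B)
  have hmajorant :
      IntervalIntegrable (fun t => A * (√α)⁻¹ * (b - t) ^ (-(1 / 2) : ℝ)) volume a b := by
    have h := (intervalIntegrable_rpow' (a := 0) (b := b - a)
      (by norm_num : (-1 : ℝ) < -(1 / 2))).comp_sub_left b
    rw [sub_zero, sub_sub_cancel] at h
    exact h.symm.const_mul _
  rw [intervalIntegrable_iff_integrableOn_Ioo_of_le hab.le] at hmajorant ⊢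
  refine hmajorant.mono' (measurable_leverage.comp_aemeasurable hKm).aestronglyMeasurable
    (ae_restrict_of_forall_mem measurableSet_Ioo fun t ht => ?_)
  obtain ⟨hlow, hup⟩ := hK t ht
  have hbt : 0 < b - t := sub_pos.mpr ht.2
  rw [Real.norm_of_nonneg (leverage_nonneg _), rpow_neg hbt.le, ← sqrt_eq_rpow, mul_assoc,
    ← mul_inv, ← sqrt_mul hα.le]
  have hA : 0 ≤ A := div_nonneg (by positivity) (stdNormalCDF_pos _).le
  calc leverage (K t) ≤ A * (√(K t))⁻¹ := leverage_le_of_le hup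
    _ ≤ A * (√(α * (b - t)))⁻¹ := by gcongr

lemma not_intervalIntegrable_leverage_comp_sq {β : ℝ} (hβ : 0 < β)
    (hK : ∀ t ∈ Ioo a b, 0 < K t ∧ K t ≤ β * (b - t)) (hab : a < b) :
    ¬IntervalIntegrable (fun t => leverage (K t) ^ 2) volume a b := by
  set m := (√(2 * π))⁻¹ * exp (-(β * (b - a)) / 2)
  refine not_intervalIntegrable_of_mul_inv_sub_le hab (m := m ^ 2 / β) (by positivity)
    fun t ht => ?_
  obtain ⟨hpos, hup⟩ := hK t ht
  calc m ^ 2 / β * (b - t)⁻¹ = m ^ 2 * (β * (b - t))⁻¹ := by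
        rw [mul_inv, div_eq_mul_inv, mul_assoc]
    _ ≤ m ^ 2 * (K t)⁻¹ := by gcongr
    _ = (m * (√(K t))⁻¹) ^ 2 := by rw [mul_pow m, inv_pow, sq_sqrt hpos.le]
    _ ≤ leverage (K t) ^ 2 := by
        gcongr
        exact le_leverage_of_le hpos.le (hup.trans (by gcongr; linarith [ht.1]))

end RemainingVariance

section IntegralOfSquare

variable {g : ℝ → ℝ} {a b c C : ℝ}

lemma integrableOn_Icc_sq_of_abs_le (hgm : Measurable g) (hg : ∀ s ∈ Ico a b, |g s| ≤ C) :
    IntegrableOn (fun s => g s ^ 2) (Icc a b) := by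
  rw [integrableOn_Icc_iff_integrableOn_Ico]
  refine Measure.integrableOn_of_bounded (M := C ^ 2) measure_Ico_lt_top.ne
    (hgm.pow_const 2).aestronglyMeasurable
    (ae_restrict_of_forall_mem measurableSet_Ico fun s hs => ?_)
  rw [norm_pow, Real.norm_eq_abs]
  exact pow_le_pow_left₀ (abs_nonneg _) (hg s hs) 2

lemma sq_mul_sub_le_integral_sq (hint : IntegrableOn (fun s => g s ^ 2) (Icc a b)) (hc : 0 ≤ c)
    (hg : ∀ s ∈ Ico a b, c ≤ g s ∧ g s ≤ C) {t : ℝ} (ht : t ∈ Icc a b) :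
    c ^ 2 * (b - t) ≤ ∫ s in t..b, g s ^ 2 ∧ ∫ s in t..b, g s ^ 2 ≤ C ^ 2 * (b - t) := by
  have hsub : Ioo t b ⊆ Ico a b := fun s hs => ⟨ht.1.trans hs.1.le, hs.2⟩
  have hint' : IntervalIntegrable (fun s => g s ^ 2) volume t b := by
    refine IntegrableOn.intervalIntegrable ?_
    rw [uIcc_of_le ht.2]
    exact hint.mono_set (Icc_subset_Icc_left ht.1)
  constructor
  · calc c ^ 2 * (b - t) = ∫ _ in t..b, c ^ 2 := by
          rw [intervalIntegral.integral_const, smul_eq_mul, mul_comm]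
      _ ≤ ∫ s in t..b, g s ^ 2 := integral_mono_on_of_le_Ioo ht.2 intervalIntegrable_const hint'
          fun s hs => pow_le_pow_left₀ hc (hg s (hsub hs)).1 2
  · calc ∫ s in t..b, g s ^ 2 ≤ ∫ _ in t..b, C ^ 2 := integral_mono_on_of_le_Ioo ht.2 hint'
          intervalIntegrable_const fun s hs =>
            pow_le_pow_left₀ (hc.trans (hg s (hsub hs)).1) (hg s (hsub hs)).2 2
      _ = C ^ 2 * (b - t) := by rw [intervalIntegral.integral_const, smul_eq_mul, mul_comm]

end IntegralOfSquare

/-- Properties of the naive strategy's leverage multiple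
`Δ(t) = K(t)^{-1/2}·Φ'(−√K(t))/Φ(−√K(t))` with `K(t) = ∫_t^T ‖σ(s)ᵀv*(s)‖²ds`, where
`g(s) = ‖σ(s)ᵀv*(s)‖` is bounded below away from `0` and bounded above: `Δ(t) > 1` on
`[0,T)`, `Δ(t) → ∞` as `t ↑ T`, `∫_0^T Δ < ∞` and `∫_0^T Δ² = ∞`. -/
theorem stmt_17 (T : ℝ) (hT : 0 < T) (g : ℝ → ℝ) (hgmeas : Measurable g)
    (c C : ℝ) (hc : 0 < c)
    (hg : ∀ s ∈ Set.Ico (0 : ℝ) T, c ≤ g s ∧ g s ≤ C) :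
    let K := fun t : ℝ => ∫ s in t..T, (g s) ^ 2;
    let Δ := fun t : ℝ => (Real.sqrt (K t))⁻¹ *
      (stdNormalPDF (-Real.sqrt (K t)) / stdNormalCDF (-Real.sqrt (K t)));
    (∀ t ∈ Set.Ico (0 : ℝ) T, 1 < Δ t) ∧
    Filter.Tendsto Δ (nhdsWithin T (Set.Iio T)) Filter.atTop ∧
    IntervalIntegrable Δ volume 0 T ∧
    ¬ IntervalIntegrable (fun s => (Δ s) ^ 2) volume 0 T := by
  intro K Δ
  have hC : 0 < C := hc.trans_le ((hg 0 ⟨le_rfl, hT⟩).1.trans (hg 0 ⟨le_rfl, hT⟩).2)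
  have hint : IntegrableOn (fun s => g s ^ 2) (Icc 0 T) :=
    integrableOn_Icc_sq_of_abs_le hgmeas fun s hs =>
      abs_le.mpr ⟨by linarith [(hg s hs).1, (hg s hs).2], (hg s hs).2⟩
  have hK (t : ℝ) (ht : t ∈ Icc 0 T) : c ^ 2 * (T - t) ≤ K t ∧ K t ≤ C ^ 2 * (T - t) :=
    sq_mul_sub_le_integral_sq hint hc.le hg ht
  have hKpos (t : ℝ) (ht : t ∈ Ico 0 T) : 0 < K t :=
    (mul_pos (pow_pos hc 2) (sub_pos.mpr ht.2)).trans_le (hK t (Ico_subset_Icc_self ht)).1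
  have hKup (t : ℝ) (ht : t ∈ Ioo 0 T) : 0 < K t ∧ K t ≤ C ^ 2 * (T - t) :=
    ⟨hKpos t (Ioo_subset_Ico_self ht), (hK t (Ioo_subset_Icc_self ht)).2⟩
  have hKm : AEMeasurable K (volume.restrict (Ioo 0 T)) := by
    have hcont : ContinuousOn K (uIcc 0 T) :=
      continuousOn_primitive_interval_left (by rwa [uIcc_of_le hT.le])
    rw [uIcc_of_le hT.le] at hcont
    exact (hcont.mono Ioo_subset_Icc_self).aemeasurable measurableSet_Ioo
  refine ⟨fun t ht => one_lt_leverage (hKpos t ht), tendsto_leverage_comp_nhdsLT hKup hT,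
    intervalIntegrable_leverage_comp (pow_pos hc 2) (B := C ^ 2 * T) (fun t ht => ⟨?_, ?_⟩) hKm hT,
    not_intervalIntegrable_leverage_comp_sq (pow_pos hC 2) hKup hT⟩
  · exact (hK t (Ioo_subset_Icc_self ht)).1
  · exact (hK t (Ioo_subset_Icc_self ht)).2.trans (by gcongr; linarith [ht.1])
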